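/- arXiv:1404.6516 — 5 statements merged into one kernel-verified Lean document; each statement's English description precedes it below -/
import Mathlib

section
/- Let S be a restriction semigroup and a, c, b, d ∈ S with a compatible with c and b compatible with d. Then ab is compatible with cd; that is, the compatibility relation is stable under multiplication. -/
structure EhresmannSemigroup (S : Type*) [Semigroup S] where
  E : Set S
  E_nonempty : E.Nonempty
  idem : ∀ a ∈ E, a * a = a
  comm : ∀ a ∈ E, ∀ b ∈ E, a * b = b * a
  mul_mem : ∀ a ∈ E, ∀ b ∈ E, a * b ∈ E
  lam : S → S
  rho : S → S
  lam_mem : ∀ a, lam a ∈ E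
  rho_mem : ∀ a, rho a ∈ E
  lam_proj : ∀ a ∈ E, lam a = a
  rho_proj : ∀ a ∈ E, rho a = a
  mul_lam : ∀ a, a * lam a = a
  rho_mul : ∀ a, rho a * a = a
  lam_lam : ∀ a b, lam (lam a * b) = lam (a * b)
  rho_rho : ∀ a b, rho (a * rho b) = rho (a * b)

/-- The natural partial order: `a ≤ b` iff `a = e * b = b * f` for some projections `e, f`. -/
def EhresmannSemigroup.nle {S : Type*} [Semigroup S] (R : EhresmannSemigroup S)
    (a b : S) : Prop :=
  ∃ e ∈ R.E, ∃ f ∈ R.E, a = e * b ∧ a = b * f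

structure RestrictionSemigroup (S : Type*) [Semigroup S] extends EhresmannSemigroup S where
  bd_left : ∀ a, ∀ f ∈ E, f * a = a * lam (f * a)
  bd_right : ∀ a, ∀ f ∈ E, a * f = rho (a * f) * a

namespace RestrictionSemigroup

variable {S : Type*} [Semigroup S]

def nle (R : RestrictionSemigroup S) : S → S → Prop :=
  R.toEhresmannSemigroup.nle

/-- Compatibility of two elements. -/
def compat (R : RestrictionSemigroup S) (a b : S) : Prop :=
  a * R.lam b = b * R.lam a ∧ R.rho b * a = R.rho a * b

/-- `s` is the join (least upper bound) of `A` w.r.t. the natural partial order. -/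
def isJoin (R : RestrictionSemigroup S) (A : Set S) (s : S) : Prop :=
  (∀ a ∈ A, R.nle a s) ∧ ∀ t, (∀ a ∈ A, R.nle a t) → R.nle s t

/-- `z` is the meet (greatest lower bound) of `A` w.r.t. the natural partial order. -/
def isMeet (R : RestrictionSemigroup S) (A : Set S) (z : S) : Prop :=
  (∀ a ∈ A, R.nle z a) ∧ ∀ w, (∀ a ∈ A, R.nle w a) → R.nle w z

end RestrictionSemigroup

namespace RestrictionSemigroup

variable {S : Type*} [Semigroup S] (R : RestrictionSemigroup S)

/-- `λ(a f) = λ(a) f` for a projection `f`. -/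
lemma lam_mul_proj (a : S) {f : S} (hf : f ∈ R.E) :
    R.lam (a * f) = R.lam a * f := by
  rw [← R.lam_lam a f, R.lam_proj _ (R.mul_mem _ (R.lam_mem a) _ hf)]

/-- `ρ(e a) = e ρ(a)` for a projection `e`. -/
lemma proj_mul_rho {e : S} (he : e ∈ R.E) (a : S) :
    R.rho (e * a) = e * R.rho a := by
  rw [← R.rho_rho e a, R.rho_proj _ (R.mul_mem _ he _ (R.rho_mem a))]

/-- key ample identity: `λ(a) b = b λ(ab)`. -/
lemma lam_shift (a b : S) : R.lam a * b = b * R.lam (a * b) := by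
  rw [R.bd_left b (R.lam a) (R.lam_mem a), R.lam_lam]

/-- key ample identity: `a ρ(b) = ρ(ab) a`. -/
lemma rho_shift (a b : S) : a * R.rho b = R.rho (a * b) * a := by
  rw [R.bd_right a (R.rho b) (R.rho_mem b), R.rho_rho]

lemma lam_absorb (c d : S) : R.lam d * R.lam (c * d) = R.lam (c * d) := by
  rw [R.comm _ (R.lam_mem d) _ (R.lam_mem (c * d)),
    ← R.lam_mul_proj (c * d) (R.lam_mem d), mul_assoc, R.mul_lam]

lemma rho_absorb (c d : S) : R.rho (c * d) * R.rho c = R.rho (c * d) := by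
  rw [R.comm _ (R.rho_mem (c * d)) _ (R.rho_mem c),
    ← R.proj_mul_rho (R.rho_mem c) (c * d), ← mul_assoc, R.rho_mul]

lemma mul_lam_eq (a b c d : S) (h : b * R.lam d = d * R.lam b) :
    (a * b) * R.lam (c * d) = (a * R.lam c) * (d * R.lam b) := by
  calc (a * b) * R.lam (c * d)
      = a * (b * (R.lam d * R.lam (c * d))) := by
        rw [R.lam_absorb, mul_assoc]
    _ = a * ((b * R.lam d) * R.lam (c * d)) := by rw [mul_assoc]
    _ = a * ((d * R.lam b) * R.lam (c * d)) := by rw [h]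
    _ = a * (d * (R.lam (c * d) * R.lam b)) := by
        rw [mul_assoc, R.comm _ (R.lam_mem b) _ (R.lam_mem (c * d))]
    _ = a * ((d * R.lam (c * d)) * R.lam b) := by rw [mul_assoc]
    _ = a * ((R.lam c * d) * R.lam b) := by rw [← R.lam_shift]
    _ = (a * R.lam c) * (d * R.lam b) := by
        rw [mul_assoc, mul_assoc]

lemma rho_mul_eq (a b c d : S) (h : R.rho c * a = R.rho a * c) :
    R.rho (c * d) * (a * b) = R.rho a * (c * (R.rho d * b)) := by
  calc R.rho (c * d) * (a * b)
      = ((R.rho (c * d) * R.rho c) * a) * b := by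
        rw [R.rho_absorb, ← mul_assoc]
    _ = (R.rho (c * d) * (R.rho c * a)) * b := by
        rw [mul_assoc (R.rho (c * d))]
    _ = (R.rho (c * d) * (R.rho a * c)) * b := by rw [h]
    _ = ((R.rho (c * d) * R.rho a) * c) * b := by
        rw [← mul_assoc (R.rho (c * d)) (R.rho a) c]
    _ = ((R.rho a * R.rho (c * d)) * c) * b := by
        rw [R.comm _ (R.rho_mem (c * d)) _ (R.rho_mem a)]
    _ = (R.rho a * (R.rho (c * d) * c)) * b := by rw [mul_assoc (R.rho a)]
    _ = (R.rho a * (c * R.rho d)) * b := by rw [← R.rho_shift]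
    _ = R.rho a * (c * (R.rho d * b)) := by rw [mul_assoc, mul_assoc]

end RestrictionSemigroup

/-- The compatibility relation on a restriction semigroup is stable under
multiplication. -/
theorem restriction_compat_mul {S : Type*} [Semigroup S]
    (R : RestrictionSemigroup S) (a b c d : S)
    (hac : R.compat a c) (hbd : R.compat b d) :
    R.compat (a * b) (c * d) := by
  obtain ⟨h1, h2⟩ := hac
  obtain ⟨h3, h4⟩ := hbd
  constructor
  · rw [R.mul_lam_eq a b c d h3, R.mul_lam_eq c d a b h3.symm, h1, h3]
  · rw [R.rho_mul_eq a b c d h2, R.rho_mul_eq c d a b h2.symm, h4,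
      ← mul_assoc (R.rho a) c, ← mul_assoc (R.rho c) a, ← h2]
end

section
/- Let S be a restriction semigroup and A ⊆ S such that both ⋁A and ⋁_{a∈A} λ(a) exist in S. Then λ(⋁A) = ⋁_{a∈A} λ(a), and dually for ρ. -/
namespace RestrictionSemigroup

variable {S : Type*} [Semigroup S] (R : RestrictionSemigroup S)

lemma lam_mul_e (a : S) {e : S} (he : e ∈ R.E) : R.lam (a * e) = R.lam a * e := by
  rw [← R.lam_lam a e]
  exact R.lam_proj _ (R.mul_mem _ (R.lam_mem a) _ he)

lemma rho_e_mul (a : S) {e : S} (he : e ∈ R.E) : R.rho (e * a) = e * R.rho a := by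
  rw [← R.rho_rho e a]
  exact R.rho_proj _ (R.mul_mem _ he _ (R.rho_mem a))

lemma nle_of_right {a b f : S} (hf : f ∈ R.E) (h : a = b * f) : R.nle a b :=
  ⟨R.rho (b * f), R.rho_mem _, f, hf, by rw [h]; exact R.bd_right b f hf, h⟩

lemma nle_of_left {a b e : S} (he : e ∈ R.E) (h : a = e * b) : R.nle a b :=
  ⟨e, he, R.lam (e * b), R.lam_mem _, h, by rw [h]; exact R.bd_left b e he⟩

lemma nle_antisymm {a b : S} (h1 : R.nle a b) (h2 : R.nle b a) : a = b := by
  obtain ⟨e, he, f, hf, _, hef2⟩ := h1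
  obtain ⟨e', he', f', hf', _, h2'⟩ := h2
  rw [hef2] at h2'
  -- h2' : b = b * f * f'
  have key : b * f = b := by
    conv_lhs => rw [h2']
    rw [mul_assoc (b * f) f' f, R.comm f' hf' f hf, ← mul_assoc (b * f) f f',
      mul_assoc b f f, R.idem f hf]
    exact h2'.symm
  rw [hef2, key]

lemma eq_mul_lam_of_nle {a b : S} (h : R.nle a b) : a = b * R.lam a := by
  obtain ⟨e, he, f, hf, _, h2⟩ := h
  have hl : R.lam a = R.lam b * f := by rw [h2]; exact R.lam_mul_e b hf
  calc a = b * f := h2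
    _ = b * R.lam b * f := by rw [R.mul_lam b]
    _ = b * (R.lam b * f) := mul_assoc _ _ _
    _ = b * R.lam a := by rw [hl]

lemma eq_rho_mul_of_nle {a b : S} (h : R.nle a b) : a = R.rho a * b := by
  obtain ⟨e, he, f, hf, h1, _⟩ := h
  have hr : R.rho a = e * R.rho b := by rw [h1]; exact R.rho_e_mul b he
  calc a = e * b := h1
    _ = e * (R.rho b * b) := by rw [R.rho_mul b]
    _ = e * R.rho b * b := (mul_assoc _ _ _).symm
    _ = R.rho a * b := by rw [hr]

lemma lam_mono {a b : S} (h : R.nle a b) : R.nle (R.lam a) (R.lam b) := by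
  obtain ⟨e, he, f, hf, _, h2⟩ := h
  exact R.nle_of_right hf (by rw [h2]; exact R.lam_mul_e b hf)

lemma rho_mono {a b : S} (h : R.nle a b) : R.nle (R.rho a) (R.rho b) := by
  obtain ⟨e, he, f, hf, h1, _⟩ := h
  exact R.nle_of_left he (by rw [h1]; exact R.rho_e_mul b he)

end RestrictionSemigroup

/-- If `⋁A` and `⋁ λ(A)` exist then `λ(⋁A) = ⋁ λ(A)`, and dually for `ρ`. -/
theorem restriction_lam_rho_preserve_joins {S : Type*} [Semigroup S]
    (R : RestrictionSemigroup S) (A : Set S) :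
    (∀ s t : S, R.isJoin A s → R.isJoin (R.lam '' A) t → R.lam s = t) ∧
    (∀ s t : S, R.isJoin A s → R.isJoin (R.rho '' A) t → R.rho s = t) := by
  constructor
  · intro s t hs ht
    have hub : ∀ x ∈ R.lam '' A, R.nle x (R.lam s) := by
      rintro x ⟨a, ha, rfl⟩
      exact R.lam_mono (hs.1 a ha)
    have hts : R.nle t (R.lam s) := ht.2 _ hub
    obtain ⟨e, he, f, hf, ht1, ht2⟩ := hts
    have htE : t ∈ R.E := by rw [ht2]; exact R.mul_mem _ (R.lam_mem s) _ hf
    have hub2 : ∀ a ∈ A, R.nle a (s * t) := by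
      intro a ha
      have h1 : a = s * R.lam a := R.eq_mul_lam_of_nle (hs.1 a ha)
      have h2 : R.lam a = t * R.lam a := by
        have h3 := R.eq_mul_lam_of_nle (ht.1 _ ⟨a, ha, rfl⟩)
        rwa [R.lam_proj _ (R.lam_mem a)] at h3
      exact R.nle_of_right (R.lam_mem a) (by rw [mul_assoc, ← h2]; exact h1)
    have hst : R.nle s (s * t) := hs.2 _ hub2
    obtain ⟨e', he', f', hf', hs1, hs2⟩ := hst
    have hlst : R.lam (s * t) = R.lam s * t := by
      rw [← R.lam_lam s t]
      exact R.lam_proj _ (R.mul_mem _ (R.lam_mem s) _ htE)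
    have hlam : R.lam s = R.lam s * t * f' := by
      have h4 : R.lam s = R.lam (s * t) * f' := by
        conv_lhs => rw [hs2]
        exact R.lam_mul_e (s * t) hf'
      rwa [hlst] at h4
    have hfix : R.lam s * t = R.lam s := by
      conv_lhs => rw [hlam]
      rw [mul_assoc (R.lam s * t) f' t, R.comm f' hf' t htE,
        ← mul_assoc (R.lam s * t) t f', mul_assoc (R.lam s) t t, R.idem t htE]
      exact hlam.symm
    have hle : R.nle (R.lam s) t := R.nle_of_left (R.lam_mem s) hfix.symm
    exact R.nle_antisymm hle ⟨e, he, f, hf, ht1, ht2⟩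
  · intro s t hs ht
    have hub : ∀ x ∈ R.rho '' A, R.nle x (R.rho s) := by
      rintro x ⟨a, ha, rfl⟩
      exact R.rho_mono (hs.1 a ha)
    have hts : R.nle t (R.rho s) := ht.2 _ hub
    obtain ⟨e, he, f, hf, ht1, ht2⟩ := hts
    have htE : t ∈ R.E := by rw [ht1]; exact R.mul_mem _ he _ (R.rho_mem s)
    have hub2 : ∀ a ∈ A, R.nle a (t * s) := by
      intro a ha
      have h1 : a = R.rho a * s := R.eq_rho_mul_of_nle (hs.1 a ha)
      have h2 : R.rho a = R.rho a * t := by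
        have h3 := R.eq_rho_mul_of_nle (ht.1 _ ⟨a, ha, rfl⟩)
        rwa [R.rho_proj _ (R.rho_mem a)] at h3
      refine R.nle_of_left (R.rho_mem a) ?_
      rw [← mul_assoc, ← h2]; exact h1
    have hst : R.nle s (t * s) := hs.2 _ hub2
    obtain ⟨e', he', f', hf', hs1, hs2⟩ := hst
    have hrst : R.rho (t * s) = t * R.rho s := by
      rw [← R.rho_rho t s]
      exact R.rho_proj _ (R.mul_mem _ htE _ (R.rho_mem s))
    have hrho : R.rho s = e' * (t * R.rho s) := by
      have h4 : R.rho s = e' * R.rho (t * s) := by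
        conv_lhs => rw [hs1]
        exact R.rho_e_mul (t * s) he'
      rwa [hrst] at h4
    have hfix : t * R.rho s = R.rho s := by
      conv_lhs => rw [hrho]
      rw [← mul_assoc t e' (t * R.rho s), R.comm t htE e' he',
        mul_assoc e' t (t * R.rho s), ← mul_assoc t t (R.rho s), R.idem t htE]
      exact hrho.symm
    have hle : R.nle (R.rho s) t := R.nle_of_right (R.rho_mem s) hfix.symm
    exact R.nle_antisymm hle ⟨e, he, f, hf, ht1, ht2⟩
end

section
/- Let Q be an Ehresmann quantale with unit e. For a, f ∈ Q with f ≤ e: a ∧ 1f = af and a ∧ f1 = fa, where 1 is the top element of Q (Stability Lemma). -/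
/-- An Ehresmann quantale: a unital quantale with join-preserving support maps
`lam`, `rho` into the down-set of the unit, satisfying the Ehresmann axioms. -/
structure EhresmannQuantale (Q : Type*) [CompleteLattice Q] [Monoid Q] where
  mul_sSup : ∀ (a : Q) (s : Set Q), a * sSup s = ⨆ b ∈ s, a * b
  sSup_mul : ∀ (a : Q) (s : Set Q), sSup s * a = ⨆ b ∈ s, b * a
  lam : Q → Q
  rho : Q → Q
  lam_le_one : ∀ a, lam a ≤ 1
  rho_le_one : ∀ a, rho a ≤ 1
  lam_sSup : ∀ s : Set Q, lam (sSup s) = ⨆ b ∈ s, lam b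
  rho_sSup : ∀ s : Set Q, rho (sSup s) = ⨆ b ∈ s, rho b
  lam_of_le_one : ∀ a : Q, a ≤ 1 → lam a = a
  rho_of_le_one : ∀ a : Q, a ≤ 1 → rho a = a
  mul_lam : ∀ a, a * lam a = a
  rho_mul : ∀ a, rho a * a = a
  lam_mul : ∀ a b, lam (a * b) = lam (lam a * b)
  rho_mul_eq : ∀ a b, rho (a * b) = rho (a * rho b)

namespace EhresmannQuantale

variable {Q : Type*} [CompleteLattice Q] [Monoid Q]

/-- The natural partial order of the underlying Ehresmann monoid. -/
def nle (E : EhresmannQuantale Q) (a b : Q) : Prop :=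
  ∃ g ≤ (1 : Q), ∃ f ≤ (1 : Q), a = g * b ∧ a = b * f

/-- `a` is a partial isometry if everything below it in the lattice order
is below it in the natural partial order. -/
def PI (E : EhresmannQuantale Q) (a : Q) : Prop :=
  ∀ b, b ≤ a → E.nle b a

/-- Compatibility of two elements. -/
def compat (E : EhresmannQuantale Q) (a b : Q) : Prop :=
  a * E.lam b = b * E.lam a ∧ E.rho b * a = E.rho a * b

end EhresmannQuantale


namespace EhresmannQuantale
section Aux
variable {Q : Type*} [CompleteLattice Q] [Monoid Q]

lemma eq_mul_left_mono (E : EhresmannQuantale Q) {a b : Q} (c : Q) (h : a ≤ b) :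
    c * a ≤ c * b := by
  have h2 := EhresmannQuantale.mul_sSup E c {a, b}
  have h1 : sSup ({a, b} : Set Q) = b := by
    rw [sSup_pair, sup_eq_right.mpr h]
  rw [h1, iSup_pair] at h2
  rw [h2]; exact le_sup_left

lemma eq_mul_right_mono (E : EhresmannQuantale Q) {a b : Q} (c : Q) (h : a ≤ b) :
    a * c ≤ b * c := by
  have h2 := EhresmannQuantale.sSup_mul E c {a, b}
  have h1 : sSup ({a, b} : Set Q) = b := by
    rw [sSup_pair, sup_eq_right.mpr h]
  rw [h1, iSup_pair] at h2
  rw [h2]; exact le_sup_left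

lemma eq_lam_mono (E : EhresmannQuantale Q) {a b : Q} (h : a ≤ b) : E.lam a ≤ E.lam b := by
  have h2 := E.lam_sSup {a, b}
  have h1 : sSup ({a, b} : Set Q) = b := by
    rw [sSup_pair, sup_eq_right.mpr h]
  rw [h1, iSup_pair] at h2
  rw [h2]; exact le_sup_left

lemma eq_rho_mono (E : EhresmannQuantale Q) {a b : Q} (h : a ≤ b) : E.rho a ≤ E.rho b := by
  have h2 := E.rho_sSup {a, b}
  have h1 : sSup ({a, b} : Set Q) = b := by
    rw [sSup_pair, sup_eq_right.mpr h]
  rw [h1, iSup_pair] at h2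
  rw [h2]; exact le_sup_left

end Aux
end EhresmannQuantale

/-- Stability Lemma: in an Ehresmann quantale, `a ⊓ ⊤f = af` and
`a ⊓ f⊤ = fa` for any projection `f ≤ e`. -/
theorem ehresmann_quantale_stability {Q : Type*} [CompleteLattice Q] [Monoid Q]
    (E : EhresmannQuantale Q) :
    ∀ a f : Q, f ≤ 1 → (a ⊓ (⊤ * f) = a * f ∧ a ⊓ (f * ⊤) = f * a) := by
  intro a f hf
  constructor
  · apply le_antisymm
    · -- a ⊓ ⊤f ≤ af
      have hb1 : a ⊓ (⊤ * f) ≤ a := inf_le_left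
      have hb2 : a ⊓ (⊤ * f) ≤ ⊤ * f := inf_le_right
      have hlamtop : E.lam (⊤ * f) ≤ f := by
        rw [E.lam_mul]
        have hle : E.lam ⊤ * f ≤ f := by
          calc E.lam ⊤ * f ≤ 1 * f := E.eq_mul_right_mono f (E.lam_le_one ⊤)
            _ = f := one_mul f
        rw [E.lam_of_le_one _ (le_trans hle hf)]
        exact hle
      have hlamb : E.lam (a ⊓ (⊤ * f)) ≤ f := le_trans (E.eq_lam_mono hb2) hlamtop
      calc a ⊓ (⊤ * f) = (a ⊓ (⊤ * f)) * E.lam (a ⊓ (⊤ * f)) := (E.mul_lam _).symm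
        _ ≤ a * E.lam (a ⊓ (⊤ * f)) := E.eq_mul_right_mono _ hb1
        _ ≤ a * f := E.eq_mul_left_mono a hlamb
    · refine le_inf ?_ ?_
      · calc a * f ≤ a * 1 := E.eq_mul_left_mono a hf
          _ = a := mul_one a
      · exact E.eq_mul_right_mono f le_top
  · apply le_antisymm
    · have hb1 : a ⊓ (f * ⊤) ≤ a := inf_le_left
      have hb2 : a ⊓ (f * ⊤) ≤ f * ⊤ := inf_le_right
      have hrhotop : E.rho (f * ⊤) ≤ f := by
        rw [E.rho_mul_eq]
        have hle : f * E.rho ⊤ ≤ f := by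
          calc f * E.rho ⊤ ≤ f * 1 := E.eq_mul_left_mono f (E.rho_le_one ⊤)
            _ = f := mul_one f
        rw [E.rho_of_le_one _ (le_trans hle hf)]
        exact hle
      have hrhob : E.rho (a ⊓ (f * ⊤)) ≤ f := le_trans (E.eq_rho_mono hb2) hrhotop
      calc a ⊓ (f * ⊤) = E.rho (a ⊓ (f * ⊤)) * (a ⊓ (f * ⊤)) := (E.rho_mul _).symm
        _ ≤ E.rho (a ⊓ (f * ⊤)) * a := E.eq_mul_left_mono _ hb1
        _ ≤ f * a := E.eq_mul_right_mono a hrhob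
    · refine le_inf ?_ ?_
      · calc f * a ≤ 1 * a := E.eq_mul_right_mono a hf
          _ = a := one_mul a
      · exact E.eq_mul_left_mono f le_top
end

section
/- Let Q be an Ehresmann quantale. Then the set of partial isometries of Q forms an order ideal with respect to the lattice order ≤: if a is a partial isometry and b ≤ a, then b is a partial isometry. -/
section Aux

variable {Q : Type*} [CompleteLattice Q] [Monoid Q]

lemma EQ_sup_mul (E : EhresmannQuantale Q) (x y c : Q) : c * (x ⊔ y) = c * x ⊔ c * y := by
  have h := E.mul_sSup c {x, y}
  rwa [sSup_pair, iSup_pair] at h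

lemma EQ_mul_sup (E : EhresmannQuantale Q) (x y c : Q) : (x ⊔ y) * c = x * c ⊔ y * c := by
  have h := E.sSup_mul c {x, y}
  rwa [sSup_pair, iSup_pair] at h

lemma EQ_mul_le_mul_left (E : EhresmannQuantale Q) {x y : Q} (h : x ≤ y) (c : Q) :
    c * x ≤ c * y := by
  have := EQ_sup_mul E x y c
  rw [sup_eq_right.mpr h] at this
  rw [this]; exact le_sup_left

lemma EQ_mul_le_mul_right (E : EhresmannQuantale Q) {x y : Q} (h : x ≤ y) (c : Q) :
    x * c ≤ y * c := by
  have := EQ_mul_sup E x y c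
  rw [sup_eq_right.mpr h] at this
  rw [this]; exact le_sup_left

lemma EQ_rho_mono (E : EhresmannQuantale Q) {x y : Q} (h : x ≤ y) : E.rho x ≤ E.rho y := by
  have h1 := E.rho_sSup {x, y}
  rw [sSup_pair, iSup_pair, sup_eq_right.mpr h] at h1
  rw [h1]; exact le_sup_left

lemma EQ_lam_mono (E : EhresmannQuantale Q) {x y : Q} (h : x ≤ y) : E.lam x ≤ E.lam y := by
  have h1 := E.lam_sSup {x, y}
  rw [sSup_pair, iSup_pair, sup_eq_right.mpr h] at h1
  rw [h1]; exact le_sup_left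

lemma EQ_idem (E : EhresmannQuantale Q) {h : Q} (hh : h ≤ 1) : h * h = h := by
  conv_rhs => rw [← E.rho_mul h]
  rw [E.rho_of_le_one h hh]

/-- For projections `p ≤ q ≤ 1`, `p * q = p`. -/
lemma EQ_proj_absorb (E : EhresmannQuantale Q) {p q : Q} (hp : p ≤ 1) (hq : q ≤ 1)
    (hpq : p ≤ q) : p * q = p := by
  refine le_antisymm ?_ ?_
  · have := EQ_mul_le_mul_left E hq p
    rwa [mul_one] at this
  · have := EQ_mul_le_mul_left E hpq p
    rwa [EQ_idem E hp] at this

/-- For projections `p ≤ q ≤ 1`, `q * p = p`. -/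
lemma EQ_proj_absorb' (E : EhresmannQuantale Q) {p q : Q} (hp : p ≤ 1) (hq : q ≤ 1)
    (hpq : p ≤ q) : q * p = p := by
  refine le_antisymm ?_ ?_
  · have := EQ_mul_le_mul_right E hq p
    rwa [one_mul] at this
  · have := EQ_mul_le_mul_right E hpq p
    rwa [EQ_idem E hp] at this

/-- If `c` is naturally below `a`, the witnessing projections can be taken to be
`rho c` and `lam c`. -/
lemma EQ_nle_normalize (E : EhresmannQuantale Q) {c a : Q} (h : E.nle c a) :
    c = E.rho c * a ∧ c = a * E.lam c := by
  obtain ⟨g, hg, f, hf, h1, h2⟩ := h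
  constructor
  · have hle : g * E.rho a ≤ 1 := by
      have h3 := EQ_mul_le_mul_left E (E.rho_le_one a) g
      have h4 := EQ_mul_le_mul_right E hg (1 : Q)
      rw [mul_one] at h3
      rw [mul_one, one_mul] at h4
      exact h3.trans h4
    have hrc : E.rho c = g * E.rho a := by
      rw [h1, E.rho_mul_eq g a, E.rho_of_le_one _ hle]
    rw [hrc, mul_assoc, E.rho_mul a, ← h1]
  · have hle : E.lam a * f ≤ 1 := by
      have h3 := EQ_mul_le_mul_left E hf (E.lam a)
      have h4 := EQ_mul_le_mul_right E (E.lam_le_one a) (1 : Q)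
      rw [mul_one] at h3
      rw [mul_one, one_mul] at h4
      exact h3.trans h4
    have hlc : E.lam c = E.lam a * f := by
      rw [h2, E.lam_mul a f, E.lam_of_le_one _ hle]
    rw [hlc, ← mul_assoc, E.mul_lam a, ← h2]

end Aux

/-- The partial isometries of an Ehresmann quantale form an order ideal with
respect to the lattice order. -/
theorem ehresmann_quantale_PI_order_ideal {Q : Type*} [CompleteLattice Q] [Monoid Q]
    (E : EhresmannQuantale Q) (a b : Q) (ha : E.PI a) (hba : b ≤ a) :
    E.PI b := by
  intro c hc
  obtain ⟨hb1, hb2⟩ := EQ_nle_normalize E (ha b hba)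
  obtain ⟨hc1, hc2⟩ := EQ_nle_normalize E (ha c (hc.trans hba))
  refine ⟨E.rho c, E.rho_le_one c, E.lam c, E.lam_le_one c, ?_, ?_⟩
  · rw [hb1, ← mul_assoc,
      EQ_proj_absorb E (E.rho_le_one c) (E.rho_le_one b) (EQ_rho_mono E hc), ← hc1]
  · rw [hb2, mul_assoc,
      EQ_proj_absorb' E (E.lam_le_one c) (E.lam_le_one b) (EQ_lam_mono E hc), ← hc2]
end

section
/- Let Q be an involutive Ehresmann quantale and a ∈ Q a partial unit (i.e., aa* ≤ e and a*a ≤ e). Then λ(a) = a*a and ρ(a) = aa*, and a is a partial isometry. Moreover, the set of partial units of Q forms an inverse monoid whose semilattice of idempotents is e↓. -/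
/-- A partial unit of an involutive quantale. -/
def isPartialUnit {Q : Type*} [CompleteLattice Q] [Monoid Q]
    (star : Q → Q) (a : Q) : Prop :=
  a * star a ≤ 1 ∧ star a * a ≤ 1

/-- In an involutive Ehresmann quantale, every partial unit `a` satisfies
`λ(a) = a*a` and `ρ(a) = aa*` and is a partial isometry; moreover the
partial units form an inverse monoid whose idempotents are exactly `e↓`. -/
theorem involutive_ehresmann_quantale_partial_units {Q : Type*}
    [CompleteLattice Q] [Monoid Q]
    (E : EhresmannQuantale Q) (star : Q → Q)
    (hstar_sSup : ∀ s : Set Q, star (sSup s) = ⨆ b ∈ s, star b)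
    (hstar_star : ∀ a, star (star a) = a)
    (hstar_mul : ∀ a b, star (a * b) = star b * star a)
    (hlam_star : ∀ a, E.lam (star a) = E.rho a) :
    (∀ a : Q, isPartialUnit star a →
      E.lam a = star a * a ∧ E.rho a = a * star a ∧ E.PI a) ∧
    (∀ a b : Q, isPartialUnit star a → isPartialUnit star b →
      isPartialUnit star (a * b)) ∧
    isPartialUnit star (1 : Q) ∧
    (∀ a : Q, isPartialUnit star a →
      ∃! b : Q, isPartialUnit star b ∧ a * b * a = a ∧ b * a * b = b) ∧
    (∀ x : Q, (isPartialUnit star x ∧ x * x = x) ↔ x ≤ (1 : Q)) := by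
  -- Monotonicity of multiplication
  have hmulL : ∀ a b c : Q, b ≤ c → a * b ≤ a * c := by
    intro a b c h
    have h1 : a * sSup {b, c} = ⨆ x ∈ ({b, c} : Set Q), a * x := E.mul_sSup a {b, c}
    have h2 : sSup ({b, c} : Set Q) = c := by
      rw [sSup_pair, sup_eq_right.mpr h]
    calc a * b ≤ ⨆ x ∈ ({b, c} : Set Q), a * x := by
          apply le_iSup₂ (f := fun x (_ : x ∈ ({b, c} : Set Q)) => a * x) b
          simp
      _ = a * c := by rw [← h1, h2]
  have hmulR : ∀ a b c : Q, b ≤ c → b * a ≤ c * a := by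
    intro a b c h
    have h1 : sSup {b, c} * a = ⨆ x ∈ ({b, c} : Set Q), x * a := E.sSup_mul a {b, c}
    have h2 : sSup ({b, c} : Set Q) = c := by
      rw [sSup_pair, sup_eq_right.mpr h]
    calc b * a ≤ ⨆ x ∈ ({b, c} : Set Q), x * a := by
          apply le_iSup₂ (f := fun x (_ : x ∈ ({b, c} : Set Q)) => x * a) b
          simp
      _ = c * a := by rw [← h1, h2]
  -- Monotonicity of star, lam, rho
  have hstar_mono : ∀ b c : Q, b ≤ c → star b ≤ star c := by
    intro b c h
    have h2 : sSup ({b, c} : Set Q) = c := by rw [sSup_pair, sup_eq_right.mpr h]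
    calc star b ≤ ⨆ x ∈ ({b, c} : Set Q), star x := by
          apply le_iSup₂ (f := fun x (_ : x ∈ ({b, c} : Set Q)) => star x) b
          simp
      _ = star c := by rw [← hstar_sSup, h2]
  have hlam_mono : ∀ b c : Q, b ≤ c → E.lam b ≤ E.lam c := by
    intro b c h
    have h2 : sSup ({b, c} : Set Q) = c := by rw [sSup_pair, sup_eq_right.mpr h]
    calc E.lam b ≤ ⨆ x ∈ ({b, c} : Set Q), E.lam x := by
          apply le_iSup₂ (f := fun x (_ : x ∈ ({b, c} : Set Q)) => E.lam x) b
          simp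
      _ = E.lam c := by rw [← E.lam_sSup, h2]
  have hrho_mono : ∀ b c : Q, b ≤ c → E.rho b ≤ E.rho c := by
    intro b c h
    have h2 : sSup ({b, c} : Set Q) = c := by rw [sSup_pair, sup_eq_right.mpr h]
    calc E.rho b ≤ ⨆ x ∈ ({b, c} : Set Q), E.rho x := by
          apply le_iSup₂ (f := fun x (_ : x ∈ ({b, c} : Set Q)) => E.rho x) b
          simp
      _ = E.rho c := by rw [← E.rho_sSup, h2]
  -- star 1 = 1
  have hstar_one : star (1 : Q) = 1 := by
    have h : ∀ x : Q, x = star 1 * x := by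
      intro x
      conv_lhs => rw [← hstar_star x, ← mul_one (star x), hstar_mul]
      rw [hstar_star]
    have := h 1
    rw [mul_one] at this
    exact this.symm
  -- rho of star
  have hrho_star : ∀ a : Q, E.rho (star a) = E.lam a := by
    intro a
    rw [← hlam_star (star a), hstar_star]
  -- lam a = star a * a for partial units
  have hlamPU : ∀ a : Q, isPartialUnit star a → E.lam a = star a * a := by
    intro a ha
    have h1 : E.lam (star a * a) = star a * a := E.lam_of_le_one _ ha.2
    have h2 : E.lam (star a * a) = E.lam a := by
      rw [E.lam_mul, hlam_star, E.rho_mul]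
    rw [← h2, h1]
  have hrhoPU : ∀ a : Q, isPartialUnit star a → E.rho a = a * star a := by
    intro a ha
    have h1 : E.rho (a * star a) = a * star a := E.rho_of_le_one _ ha.1
    have h2 : E.rho (a * star a) = E.rho a := by
      rw [E.rho_mul_eq, hrho_star, E.mul_lam]
    rw [← h2, h1]
  -- the triple identity
  have htriple : ∀ a : Q, isPartialUnit star a → a * star a * a = a := by
    intro a ha
    rw [← hrhoPU a ha, E.rho_mul]
  have htriple' : ∀ a : Q, isPartialUnit star a → star a * a * star a = star a := by
    intro a ha
    rw [mul_assoc, ← hrhoPU a ha, ← hlam_star, E.mul_lam]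
  -- star of a partial unit is a partial unit
  have hstarPU : ∀ a : Q, isPartialUnit star a → isPartialUnit star (star a) := by
    intro a ha
    constructor
    · rw [hstar_star]; exact ha.2
    · rw [hstar_star]; exact ha.1
  -- partial isometry
  have hPI : ∀ a : Q, isPartialUnit star a → E.PI a := by
    intro a ha b hb
    refine ⟨b * star a, ?_, star a * b, ?_, ?_, ?_⟩
    · calc b * star a ≤ a * star a := hmulR _ _ _ hb
        _ ≤ 1 := ha.1
    · calc star a * b ≤ star a * a := hmulL _ _ _ hb
        _ ≤ 1 := ha.2
    · apply le_antisymm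
      · calc b = b * E.lam b := (E.mul_lam b).symm
          _ ≤ b * E.lam a := hmulL _ _ _ (hlam_mono _ _ hb)
          _ = b * (star a * a) := by rw [hlamPU a ha]
          _ = b * star a * a := (mul_assoc _ _ _).symm
      · calc b * star a * a = b * (star a * a) := mul_assoc _ _ _
          _ ≤ b * 1 := hmulL _ _ _ ha.2
          _ = b := mul_one b
    · apply le_antisymm
      · calc b = E.rho b * b := (E.rho_mul b).symm
          _ ≤ E.rho a * b := hmulR _ _ _ (hrho_mono _ _ hb)
          _ = a * star a * b := by rw [hrhoPU a ha]
          _ = a * (star a * b) := mul_assoc _ _ _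
      · calc a * (star a * b) = a * star a * b := (mul_assoc _ _ _).symm
          _ ≤ 1 * b := hmulR _ _ _ ha.1
          _ = b := one_mul b
  -- closure under multiplication
  have hmulPU : ∀ a b : Q, isPartialUnit star a → isPartialUnit star b →
      isPartialUnit star (a * b) := by
    intro a b ha hb
    constructor
    · rw [hstar_mul]
      calc a * b * (star b * star a) = a * (b * star b) * star a := by
            simp only [mul_assoc]
        _ ≤ a * 1 * star a := hmulR _ _ _ (hmulL _ _ _ hb.1)
        _ = a * star a := by rw [mul_one]
        _ ≤ 1 := ha.1
    · rw [hstar_mul]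
      calc star b * star a * (a * b) = star b * (star a * a) * b := by
            simp only [mul_assoc]
        _ ≤ star b * 1 * b := hmulR _ _ _ (hmulL _ _ _ ha.2)
        _ = star b * b := by rw [mul_one]
        _ ≤ 1 := hb.2
  -- 1 is a partial unit
  have honePU : isPartialUnit star (1 : Q) := by
    constructor <;> rw [hstar_one, mul_one] <;> exact le_refl 1
  -- elements ≤ 1 are idempotent
  have hidem : ∀ x : Q, x ≤ 1 → x * x = x := by
    intro x hx
    nth_rewrite 2 [← E.lam_of_le_one x hx]
    exact E.mul_lam x
  -- elements ≤ 1 commute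
  have hcomm : ∀ x y : Q, x ≤ 1 → y ≤ 1 → x * y = y * x := by
    have key : ∀ x y : Q, x ≤ 1 → y ≤ 1 → x * y = x ⊓ y := by
      intro x y hx hy
      apply le_antisymm
      · apply le_inf
        · calc x * y ≤ x * 1 := hmulL _ _ _ hy
            _ = x := mul_one x
        · calc x * y ≤ 1 * y := hmulR _ _ _ hx
            _ = y := one_mul y
      · calc x ⊓ y = (x ⊓ y) * (x ⊓ y) := (hidem _ (le_trans inf_le_left hx)).symm
          _ ≤ x * y := le_trans (hmulL _ _ _ inf_le_right) (hmulR _ _ _ inf_le_left)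
    intro x y hx hy
    rw [key x y hx hy, key y x hy hx, inf_comm]
  -- idempotent partial units are ≤ 1
  have hle_one : ∀ x : Q, isPartialUnit star x → x * x = x → x ≤ 1 := by
    intro x hx hxx
    have hss : star x * star x = star x := by rw [← hstar_mul, hxx]
    have hx_ef : x = (x * star x) * (star x * x) := by
      calc x = x * star x * x := (htriple x hx).symm
        _ = x * (star x * star x) * x := by rw [hss]
        _ = (x * star x) * (star x * x) := by simp only [mul_assoc]
    calc x = (x * star x) * (star x * x) := hx_ef
      _ ≤ 1 * (star x * x) := hmulR _ _ _ hx.1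
      _ = star x * x := one_mul _
      _ ≤ 1 := hx.2
  refine ⟨fun a ha => ⟨hlamPU a ha, hrhoPU a ha, hPI a ha⟩, hmulPU, honePU, ?_, ?_⟩
  · -- unique inverses
    intro a ha
    refine ⟨star a, ⟨hstarPU a ha, htriple a ha, htriple' a ha⟩, ?_⟩
    rintro b ⟨hb, hab, hbab⟩
    -- the four idempotents
    have hab1 : a * b ≤ 1 := by
      apply hle_one _ (hmulPU a b ha hb)
      calc a * b * (a * b) = (a * b * a) * b := by simp only [mul_assoc]
        _ = a * b := by rw [hab]
    have hba1 : b * a ≤ 1 := by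
      apply hle_one _ (hmulPU b a hb ha)
      calc b * a * (b * a) = (b * a * b) * a := by simp only [mul_assoc]
        _ = b * a := by rw [hbab]
    have hab'1 : a * star a ≤ 1 := ha.1
    have hb'a1 : star a * a ≤ 1 := ha.2
    have key1 : b = b * a * star a := by
      have c1 : (a * star a) * (a * b) = (a * b) * (a * star a) :=
        hcomm _ _ hab'1 hab1
      calc b = b * a * b := hbab.symm
        _ = b * (a * star a * a) * b := by rw [htriple a ha]
        _ = b * ((a * star a) * (a * b)) := by simp only [mul_assoc]
        _ = b * ((a * b) * (a * star a)) := by rw [c1]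
        _ = (b * a * b) * (a * star a) := by simp only [mul_assoc]
        _ = b * (a * star a) := by rw [hbab]
        _ = b * a * star a := (mul_assoc _ _ _).symm
    have key2 : star a = b * a * star a := by
      have c2 : (star a * a) * (b * a) = (b * a) * (star a * a) :=
        hcomm _ _ hb'a1 hba1
      calc star a = star a * a * star a := (htriple' a ha).symm
        _ = star a * (a * b * a) * star a := by rw [hab]
        _ = (star a * a) * (b * a) * star a := by simp only [mul_assoc]
        _ = (b * a) * (star a * a) * star a := by rw [c2]
        _ = b * a * (star a * a * star a) := by simp only [mul_assoc]
        _ = b * a * star a := by rw [htriple' a ha]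
    exact key1.trans key2.symm
  · -- idempotent partial units = down-set of 1
    intro x
    constructor
    · rintro ⟨hx, hxx⟩
      exact hle_one x hx hxx
    · intro hx
      have hsx : star x ≤ 1 := by
        calc star x ≤ star 1 := hstar_mono _ _ hx
          _ = 1 := hstar_one
      refine ⟨⟨?_, ?_⟩, hidem x hx⟩
      · calc x * star x ≤ 1 * star x := hmulR _ _ _ hx
          _ = star x := one_mul _
          _ ≤ 1 := hsx
      · calc star x * x ≤ star x * 1 := hmulL _ _ _ hx
          _ = star x := mul_one _
          _ ≤ 1 := hsx
end
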